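/- arXiv:2507.17063 — 11 statements merged into one kernel-verified Lean document; each statement's English description precedes it below -/
import Mathlib

section
/- Let A, B, C be nonempty finite sets in a metric space (M,d), and define f(X,Y) = Σ_{x∈X} Σ_{y∈Y} d(x,y). Then f(A,B) ≤ (|B|/|C|)·f(A,C) + (|A|/|C|)·f(B,C). -/
open Finset

/-- Averaging the triangle inequality `dist a b ≤ dist a c + dist b c` over `c ∈ C`. -/
theorem card_mul_sum_sum_dist_le {M : Type*} [PseudoMetricSpace M] (A B C : Finset M) :
    (#C : ℝ) * ∑ a ∈ A, ∑ b ∈ B, dist a b ≤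
      #B * ∑ a ∈ A, ∑ c ∈ C, dist a c + #A * ∑ b ∈ B, ∑ c ∈ C, dist b c :=
  calc (#C : ℝ) * ∑ a ∈ A, ∑ b ∈ B, dist a b
      = ∑ a ∈ A, ∑ b ∈ B, ∑ _c ∈ C, dist a b := by simp only [sum_const, nsmul_eq_mul, mul_sum]
    _ ≤ ∑ a ∈ A, ∑ b ∈ B, ∑ c ∈ C, (dist a c + dist b c) := by
        gcongr with a _ b _ c _
        exact dist_triangle_right a b c
    _ = #B * ∑ a ∈ A, ∑ c ∈ C, dist a c + #A * ∑ b ∈ B, ∑ c ∈ C, dist b c := by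
        simp only [sum_add_distrib, sum_const, nsmul_eq_mul, mul_sum]

theorem stmt_2_general {M : Type*} [MetricSpace M] (A B C : Finset M)
    (hC : C.Nonempty) :
    ∑ a ∈ A, ∑ b ∈ B, dist a b ≤
      ((B.card : ℝ) / C.card) * ∑ a ∈ A, ∑ c ∈ C, dist a c +
        ((A.card : ℝ) / C.card) * ∑ b ∈ B, ∑ c ∈ C, dist b c := by
  have hC_pos : (0 : ℝ) < #C := by exact_mod_cast hC.card_pos
  rw [div_mul_eq_mul_div, div_mul_eq_mul_div, ← add_div, le_div_iff₀ hC_pos, mul_comm]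
  exact card_mul_sum_sum_dist_le A B C

theorem stmt_2 {M : Type*} [MetricSpace M] (A B C : Finset M)
    (hA : A.Nonempty) (hB : B.Nonempty) (hC : C.Nonempty) :
    ∑ a ∈ A, ∑ b ∈ B, dist a b ≤
      ((B.card : ℝ) / C.card) * ∑ a ∈ A, ∑ c ∈ C, dist a c +
        ((A.card : ℝ) / C.card) * ∑ b ∈ B, ∑ c ∈ C, dist b c :=
  stmt_2_general A B C hC
end

section
/- Let O be an optimal k-subset of facilities minimizing Sum-Sum and A an optimal k-subset minimizing Sum-Max, where Sum-Max(A) = Σ_{i∈C} max_{a∈A} d(i,a) and Sum-Sum(A) = Σ_{i∈C} Σ_{a∈A} d(i,a). Then Sum-Max(O) ≤ 3 · Sum-Max(A). -/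
theorem stmt_4 {M : Type*} [MetricSpace M] (C F : Finset M) (hC : C.Nonempty)
    (k : ℕ) (hk : 1 ≤ k)
    (O A : Finset M) (hOF : O ⊆ F) (hOcard : O.card = k)
    (hAF : A ⊆ F) (hAcard : A.card = k)
    (hOne : O.Nonempty) (hAne : A.Nonempty)
    (hOopt : ∀ P ⊆ F, P.card = k →
      ∑ i ∈ C, ∑ o ∈ O, dist i o ≤ ∑ i ∈ C, ∑ p ∈ P, dist i p)
    (hAopt : ∀ P ⊆ F, ∀ hP : P.Nonempty, P.card = k →
      ∑ i ∈ C, A.sup' hAne (fun a => dist i a) ≤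
        ∑ i ∈ C, P.sup' hP (fun p => dist i p)) :
    ∑ i ∈ C, O.sup' hOne (fun o => dist i o) ≤
      3 * ∑ i ∈ C, A.sup' hAne (fun a => dist i a) := by
  classical
  set f : M → ℝ := fun i => O.sup' hOne (fun o => dist i o) with hf
  set g : M → ℝ := fun i => A.sup' hAne (fun a => dist i a) with hg
  obtain ⟨a0, ha0⟩ := hAne
  have hgnn : ∀ i, 0 ≤ g i := fun i =>
    le_trans dist_nonneg (Finset.le_sup' (fun a => dist i a) ha0)
  by_cases hAO : A = O
  · subst hAO
    have hfg : ∀ i, f i = g i := fun i => rfl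
    have h1 : ∑ i ∈ C, f i = ∑ i ∈ C, g i := Finset.sum_congr rfl (fun i _ => hfg i)
    have h2 : 0 ≤ ∑ i ∈ C, g i := Finset.sum_nonneg (fun i _ => hgnn i)
    linarith
  · have hex : ∃ a ∈ A, a ∉ O := by
      by_contra h
      push_neg at h
      exact hAO (Finset.eq_of_subset_of_card_le (fun x hx => h x hx)
        (by rw [hOcard, hAcard]))
    obtain ⟨a', ha', ha'O⟩ := hex
    have hswap : ∀ o ∈ O, ∑ j ∈ C, dist j o ≤ ∑ j ∈ C, dist j a' := by
      intro o ho
      have ha'e : a' ∉ O.erase o := fun h => ha'O (Finset.mem_of_mem_erase h)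
      have hPF : insert a' (O.erase o) ⊆ F :=
        Finset.insert_subset (hAF ha')
          (Finset.Subset.trans (Finset.erase_subset _ _) hOF)
      have hcard : (insert a' (O.erase o)).card = k := by
        rw [Finset.card_insert_of_notMem ha'e, Finset.card_erase_of_mem ho, hOcard]
        omega
      have hopt := hOopt _ hPF hcard
      have h1 : ∀ i : M, ∑ p ∈ insert a' (O.erase o), dist i p
          = dist i a' + ∑ p ∈ O.erase o, dist i p :=
        fun i => Finset.sum_insert ha'e
      have h2 : ∀ i : M, ∑ p ∈ O, dist i p = dist i o + ∑ p ∈ O.erase o, dist i p :=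
        fun i => (Finset.add_sum_erase _ _ ho).symm
      simp only [h1, h2, Finset.sum_add_distrib] at hopt
      linarith
    have key : ∀ i ∈ C, (C.card : ℝ) * f i ≤ (C.card : ℝ) * g i + 2 * ∑ j ∈ C, g j := by
      intro i _
      obtain ⟨o, ho, hoe⟩ := Finset.exists_mem_eq_sup' hOne (fun o => dist i o)
      have hfi : f i = dist i o := hoe
      have h1 : ∀ j ∈ C, f i ≤ g i + g j + dist j o := by
        intro j hj
        have t1 : dist i a0 ≤ g i := Finset.le_sup' (fun a => dist i a) ha0
        have t2 : dist j a0 ≤ g j := Finset.le_sup' (fun a => dist j a) ha0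
        have t3 := dist_triangle i a0 o
        have t4 := dist_triangle a0 j o
        have t5 : dist a0 j = dist j a0 := dist_comm _ _
        linarith [hfi ▸ (le_refl (f i))]
      have hsum : ∑ _j ∈ C, f i ≤ ∑ j ∈ C, (g i + g j + dist j o) :=
        Finset.sum_le_sum h1
      have hdo : ∑ j ∈ C, dist j o ≤ ∑ j ∈ C, g j := by
        calc ∑ j ∈ C, dist j o ≤ ∑ j ∈ C, dist j a' := hswap o ho
          _ ≤ ∑ j ∈ C, g j :=
            Finset.sum_le_sum (fun j _ => Finset.le_sup' (fun a => dist j a) ha')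
      simp only [Finset.sum_add_distrib, Finset.sum_const, nsmul_eq_mul] at hsum
      linarith
    have hsum : ∑ i ∈ C, (C.card : ℝ) * f i
        ≤ ∑ i ∈ C, ((C.card : ℝ) * g i + 2 * ∑ j ∈ C, g j) :=
      Finset.sum_le_sum key
    rw [← Finset.mul_sum] at hsum
    rw [Finset.sum_add_distrib, ← Finset.mul_sum, Finset.sum_const, nsmul_eq_mul] at hsum
    have hn : (0 : ℝ) < C.card := by exact_mod_cast hC.card_pos
    have hfin : (C.card : ℝ) * ∑ i ∈ C, f i ≤ (C.card : ℝ) * (3 * ∑ i ∈ C, g i) := by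
      ring_nf
      ring_nf at hsum
      linarith
    exact le_of_mul_le_mul_left hfin hn
end

section
/- Let O be an optimal k-subset of facilities minimizing Sum-Sum and B an optimal k-subset minimizing Max-Max, where Max-Max(A) = max_{i∈C} max_{a∈A} d(i,a). Then Max-Max(O) ≤ 3 · Max-Max(B). -/
theorem stmt_5 {M : Type*} [MetricSpace M] (C F : Finset M) (hC : C.Nonempty)
    (k : ℕ) (hk : 1 ≤ k)
    (O B : Finset M) (hOF : O ⊆ F) (hOcard : O.card = k)
    (hBF : B ⊆ F) (hBcard : B.card = k)
    (hOne : O.Nonempty) (hBne : B.Nonempty)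
    (hOopt : ∀ P ⊆ F, P.card = k →
      ∑ i ∈ C, ∑ o ∈ O, dist i o ≤ ∑ i ∈ C, ∑ p ∈ P, dist i p)
    (hBopt : ∀ P ⊆ F, ∀ hP : P.Nonempty, P.card = k →
      C.sup' hC (fun i => B.sup' hBne (fun b => dist i b)) ≤
        C.sup' hC (fun i => P.sup' hP (fun p => dist i p))) :
    C.sup' hC (fun i => O.sup' hOne (fun o => dist i o)) ≤
      3 * C.sup' hC (fun i => B.sup' hBne (fun b => dist i b)) := by
  classical
  set r := C.sup' hC (fun i => B.sup' hBne (fun b => dist i b)) with hr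
  have hrle : ∀ i ∈ C, ∀ b ∈ B, dist i b ≤ r := by
    intro i hi b hb
    exact le_trans (Finset.le_sup' (fun b => dist i b) hb)
      (Finset.le_sup' (fun i => B.sup' hBne (fun b => dist i b)) hi)
  apply Finset.sup'_le
  intro i hi
  apply Finset.sup'_le
  intro o ho
  -- find b ∈ B with b ∉ O.erase o
  obtain ⟨b, hbB, hbe⟩ : ∃ b ∈ B, b ∉ O.erase o := by
    by_contra h
    push_neg at h
    have hsub : B ⊆ O.erase o := h
    have := Finset.card_le_card hsub
    rw [hBcard, Finset.card_erase_of_mem ho, hOcard] at this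
    omega
  set P := insert b (O.erase o) with hP
  have hPF : P ⊆ F := by
    intro x hx
    rcases Finset.mem_insert.mp hx with h | h
    · exact hBF (h ▸ hbB)
    · exact hOF (Finset.erase_subset _ _ h)
  have hPcard : P.card = k := by
    rw [hP, Finset.card_insert_of_notMem hbe, Finset.card_erase_of_mem ho, hOcard]
    omega
  have hsum := hOopt P hPF hPcard
  -- rewrite both sums
  have hO : ∀ j, ∑ x ∈ O, dist j x = dist j o + ∑ x ∈ O.erase o, dist j x := by
    intro j; rw [Finset.add_sum_erase _ _ ho]
  have hPsum : ∀ j, ∑ x ∈ P, dist j x = dist j b + ∑ x ∈ O.erase o, dist j x := by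
    intro j; rw [hP, Finset.sum_insert hbe]
  have key : ∑ j ∈ C, dist j o ≤ ∑ j ∈ C, dist j b := by
    have h1 : ∑ j ∈ C, (dist j o + ∑ x ∈ O.erase o, dist j x)
        ≤ ∑ j ∈ C, (dist j b + ∑ x ∈ O.erase o, dist j x) := by
      simpa only [hO, hPsum] using hsum
    rw [Finset.sum_add_distrib, Finset.sum_add_distrib] at h1
    linarith
  have key2 : ∑ j ∈ C, dist j o ≤ ∑ j ∈ C, (fun _ => r) j := by
    calc ∑ j ∈ C, dist j o ≤ ∑ j ∈ C, dist j b := key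
    _ ≤ ∑ j ∈ C, r := Finset.sum_le_sum (fun j hj => hrle j hj b hbB)
  obtain ⟨j0, hj0C, hj0⟩ := Finset.exists_le_of_sum_le hC key2
  calc dist i o ≤ dist i b + dist b o := dist_triangle i b o
    _ ≤ dist i b + (dist b j0 + dist j0 o) := by
        have := dist_triangle b j0 o; linarith
    _ ≤ r + (r + r) := by
        have h1 := hrle i hi b hbB
        have h2 := hrle j0 hj0C b hbB
        rw [dist_comm b j0] at *
        linarith
    _ = 3 * r := by ring
end

section
/- The optimal solution to Sum-Sum is simultaneously a 3-approximation for Max-Sum, Max-Max, and Sum-Max: if O minimizes Sum-Sum(A) = Σ_{i∈C} Σ_{a∈A} d(i,a) over k-subsets A ⊆ F, then Max-Sum(O) ≤ 3·min_A Max-Sum(A), Max-Max(O) ≤ 3·min_A Max-Max(A), and Sum-Max(O) ≤ 3·min_A Sum-Max(A). -/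
open Finset

theorem stmt_6 {M : Type*} [MetricSpace M] (C F : Finset M) (hC : C.Nonempty)
    (k : ℕ) (hk : 1 ≤ k)
    (O : Finset M) (hOF : O ⊆ F) (hOcard : O.card = k) (hOne : O.Nonempty)
    (hOopt : ∀ P ⊆ F, P.card = k →
      ∑ i ∈ C, ∑ o ∈ O, dist i o ≤ ∑ i ∈ C, ∑ p ∈ P, dist i p) :
    (∀ P ⊆ F, P.card = k →
        C.sup' hC (fun i => ∑ o ∈ O, dist i o) ≤
          3 * C.sup' hC (fun i => ∑ p ∈ P, dist i p)) ∧
    (∀ P ⊆ F, ∀ hP : P.Nonempty, P.card = k →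
        C.sup' hC (fun i => O.sup' hOne (fun o => dist i o)) ≤
          3 * C.sup' hC (fun i => P.sup' hP (fun p => dist i p))) ∧
    (∀ P ⊆ F, ∀ hP : P.Nonempty, P.card = k →
        ∑ i ∈ C, O.sup' hOne (fun o => dist i o) ≤
          3 * ∑ i ∈ C, P.sup' hP (fun p => dist i p)) := by
  classical
  -- swap lemma: if p ∈ P \ O, then every o ∈ O is on average at least as close to C as p
  have swap : ∀ P ⊆ F, P.card = k → ∀ p ∈ P, p ∉ O → ∀ o ∈ O,
      ∑ i ∈ C, dist i o ≤ ∑ i ∈ C, dist i p := by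
    intro P hPF hPk p hpP hpO o hoO
    have hpe : p ∉ O.erase o := fun h => hpO (mem_of_mem_erase h)
    have hsub : insert p (O.erase o) ⊆ F := by
      intro x hx
      rcases mem_insert.mp hx with h | h
      · exact hPF (h ▸ hpP)
      · exact hOF (mem_of_mem_erase h)
    have hcard : (insert p (O.erase o)).card = k := by
      rw [card_insert_of_notMem hpe, card_erase_of_mem hoO, hOcard]
      omega
    have h := hOopt _ hsub hcard
    have hrw : ∀ i : M, ∑ a ∈ insert p (O.erase o), dist i a
        = dist i p + (∑ a ∈ O, dist i a - dist i o) := by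
      intro i
      rw [sum_insert hpe, Finset.sum_erase_eq_sub hoO]
    simp only [hrw] at h
    rw [Finset.sum_add_distrib, Finset.sum_sub_distrib] at h
    linarith
  -- a P ≠ O gives a p ∈ P \ O
  have exP : ∀ P : Finset M, P.card = k → P ≠ O → ∃ p ∈ P, p ∉ O := by
    intro P hPk hne
    by_contra hcon
    push_neg at hcon
    exact hne (Finset.eq_of_subset_of_card_le hcon (by omega))
  refine ⟨?_, ?_, ?_⟩
  · -- Max-Sum
    intro P hPF hPk
    set R := C.sup' hC (fun i => ∑ p ∈ P, dist i p) with hRdef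
    have hRle : ∀ i ∈ C, ∑ p ∈ P, dist i p ≤ R := fun i hi =>
      le_sup' (fun i => ∑ p ∈ P, dist i p) hi
    have hsum : ∑ i ∈ C, (∑ o ∈ O, dist i o) ≤ ∑ i ∈ C, R :=
      le_trans (hOopt P hPF hPk) (Finset.sum_le_sum hRle)
    obtain ⟨j, hjC, hj⟩ := Finset.exists_le_of_sum_le hC hsum
    apply Finset.sup'_le
    intro i hiC
    have h1 : ∑ o ∈ O, dist i o ≤ ∑ o ∈ O, (dist i j + dist j o) :=
      Finset.sum_le_sum (fun o _ => dist_triangle i j o)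
    have h1' : ∑ o ∈ O, (dist i j + dist j o)
        = (k : ℝ) * dist i j + ∑ o ∈ O, dist j o := by
      rw [Finset.sum_add_distrib, Finset.sum_const, hOcard, nsmul_eq_mul]
    have h2 : (k : ℝ) * dist i j ≤ 2 * R := by
      have ht : ∀ p ∈ P, dist i j ≤ dist i p + dist j p := by
        intro p _
        calc dist i j ≤ dist i p + dist p j := dist_triangle i p j
          _ = dist i p + dist j p := by rw [dist_comm p j]
      have hsum2 : ∑ p ∈ P, dist i j ≤ ∑ p ∈ P, (dist i p + dist j p) :=
        Finset.sum_le_sum ht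
      rw [Finset.sum_const, hPk, nsmul_eq_mul, Finset.sum_add_distrib] at hsum2
      have hi' := hRle i hiC
      have hj' := hRle j hjC
      linarith
    linarith
  · -- Max-Max
    intro P hPF hP hPk
    by_cases hPO : P = O
    · have h0 : (0 : ℝ) ≤ C.sup' hC (fun i => P.sup' hP (fun p => dist i p)) := by
        obtain ⟨i, hi⟩ := id hC
        obtain ⟨q, hq⟩ := id hP
        calc (0 : ℝ) ≤ dist i q := dist_nonneg
          _ ≤ P.sup' hP (fun p => dist i p) := le_sup' (fun p => dist i p) hq
          _ ≤ C.sup' hC (fun i => P.sup' hP (fun p => dist i p)) := by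
              apply le_sup' (fun i => P.sup' hP (fun p => dist i p)) hi
      have heq : C.sup' hC (fun i => O.sup' hOne (fun o => dist i o))
          = C.sup' hC (fun i => P.sup' hP (fun p => dist i p)) := by
        subst hPO; rfl
      rw [heq]
      linarith
    · obtain ⟨p, hpP, hpO⟩ := exP P hPk hPO
      set R := C.sup' hC (fun i => P.sup' hP (fun p => dist i p)) with hRdef
      have hRle : ∀ i ∈ C, ∀ q ∈ P, dist i q ≤ R := fun i hi q hq =>
        le_trans (le_sup' _ hq) (le_sup' (fun i => P.sup' hP (fun p => dist i p)) hi)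
      apply Finset.sup'_le
      intro i hiC
      apply Finset.sup'_le
      intro o hoO
      have hkey := swap P hPF hPk p hpP hpO o hoO
      have hs : ∑ j ∈ C, dist j o ≤ ∑ j ∈ C, R :=
        le_trans hkey (Finset.sum_le_sum (fun j hj => hRle j hj p hpP))
      obtain ⟨j, hjC, hj⟩ := Finset.exists_le_of_sum_le hC hs
      have t1 : dist i o ≤ dist i j + dist j o := dist_triangle i j o
      have t2 : dist i j ≤ dist i p + dist j p := by
        calc dist i j ≤ dist i p + dist p j := dist_triangle i p j
          _ = dist i p + dist j p := by rw [dist_comm p j]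
      have t3 := hRle i hiC p hpP
      have t4 := hRle j hjC p hpP
      linarith
  · -- Sum-Max
    intro P hPF hP hPk
    set S := ∑ i ∈ C, P.sup' hP (fun p => dist i p) with hSdef
    have hS0 : (0 : ℝ) ≤ S := by
      apply Finset.sum_nonneg
      intro i _
      obtain ⟨q, hq⟩ := id hP
      exact le_trans dist_nonneg (le_sup' (fun p => dist i p) hq)
    by_cases hPO : P = O
    · have heq : ∑ i ∈ C, O.sup' hOne (fun o => dist i o)
          = ∑ i ∈ C, P.sup' hP (fun p => dist i p) := by
        subst hPO; rfl
      rw [heq]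
      linarith
    · obtain ⟨p, hpP, hpO⟩ := exP P hPk hPO
      set S' := ∑ j ∈ C, dist j p with hS'def
      have hS'S : S' ≤ S :=
        Finset.sum_le_sum (fun j _ => le_sup' (fun q => dist j q) hpP)
      set n := C.card with hndef
      have hn : (0 : ℝ) < n := by exact_mod_cast Finset.card_pos.mpr hC
      have key : ∀ i ∈ C, (n : ℝ) * O.sup' hOne (fun o => dist i o)
          ≤ (n : ℝ) * P.sup' hP (fun p => dist i p) + 2 * S' := by
        intro i hiC
        obtain ⟨o, hoO, ho⟩ := Finset.exists_mem_eq_sup' hOne (fun o => dist i o)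
        rw [ho]
        have h1 : ∑ j ∈ C, dist i o ≤ ∑ j ∈ C, (dist i j + dist j o) :=
          Finset.sum_le_sum (fun j _ => dist_triangle i j o)
        rw [Finset.sum_const, nsmul_eq_mul, Finset.sum_add_distrib] at h1
        have h2 : ∑ j ∈ C, dist j o ≤ S' := swap P hPF hPk p hpP hpO o hoO
        have h3 : ∑ j ∈ C, dist i j ≤ ∑ j ∈ C, (dist i p + dist j p) := by
          apply Finset.sum_le_sum
          intro j _
          calc dist i j ≤ dist i p + dist p j := dist_triangle i p j
            _ = dist i p + dist j p := by rw [dist_comm p j]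
        rw [Finset.sum_add_distrib, Finset.sum_const, nsmul_eq_mul] at h3
        have h4 : dist i p ≤ P.sup' hP (fun p => dist i p) := le_sup' _ hpP
        have h5 : (n : ℝ) * dist i p ≤ (n : ℝ) * P.sup' hP (fun p => dist i p) :=
          mul_le_mul_of_nonneg_left h4 (le_of_lt hn)
        linarith
      have total := Finset.sum_le_sum key
      rw [← Finset.mul_sum] at total
      have hRs : ∑ i ∈ C, ((n : ℝ) * P.sup' hP (fun p => dist i p) + 2 * S')
          = (n : ℝ) * S + (n : ℝ) * (2 * S') := by
        rw [Finset.sum_add_distrib, ← Finset.mul_sum, Finset.sum_const, nsmul_eq_mul]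
      rw [hRs] at total
      have hfin : (n : ℝ) * (∑ i ∈ C, O.sup' hOne (fun o => dist i o))
          ≤ (n : ℝ) * (3 * S) := by nlinarith
      exact le_of_mul_le_mul_left hfin hn
end

section
/- There exists an instance (clients and facility multiset in a metric space, k = 2) such that every valid choice of 2 facilities has simultaneous approximation ratio at least 1+√2 for the pair (Max-Sum, Sum-Sum): concretely, on a line with a client at A, n−1 clients at B, facilities at A, B, C, d(A,B)=1, d(C,B)=√2−1, as n→∞ every 2-subset A' of facilities satisfies max( Max-Sum(A')/opt_MaxSum, Sum-Sum(A')/opt_SumSum ) ≥ 1+√2 in the limit. -/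
/-- Facility locations on the line: A = 0, B = 1, C = √2. -/
noncomputable def fac12 : Finset ℝ := {0, 1, Real.sqrt 2}

/-- Max-Sum cost of a facility set: one client at 0 and clients at 1
(the max over client locations of the summed distance). -/
noncomputable def maxSum12 (A : Finset ℝ) : ℝ :=
  max (∑ a ∈ A, dist (0 : ℝ) a) (∑ a ∈ A, dist (1 : ℝ) a)

/-- Sum-Sum cost of a facility set with one client at 0 and n−1 clients at 1. -/
noncomputable def sumSum12 (n : ℕ) (A : Finset ℝ) : ℝ :=
  ∑ a ∈ A, (dist (0 : ℝ) a + ((n : ℝ) - 1) * dist (1 : ℝ) a)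

private lemma hs1 : 1 < Real.sqrt 2 := by
  have h : Real.sqrt 1 < Real.sqrt 2 := Real.sqrt_lt_sqrt (by norm_num) (by norm_num)
  simpa using h

private lemma hs2 : Real.sqrt 2 ^ 2 = 2 := Real.sq_sqrt (by norm_num)

private lemma hsne0 : Real.sqrt 2 ≠ 0 := by nlinarith [hs1]
private lemma hsne1 : Real.sqrt 2 ≠ 1 := by nlinarith [hs1]

private lemma d01 : dist (0 : ℝ) 1 = 1 := by simp [Real.dist_eq]
private lemma d0s : dist (0 : ℝ) (Real.sqrt 2) = Real.sqrt 2 := by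
  rw [Real.dist_eq, abs_sub_comm, sub_zero, abs_of_nonneg (Real.sqrt_nonneg 2)]
private lemma d1s : dist (1 : ℝ) (Real.sqrt 2) = Real.sqrt 2 - 1 := by
  rw [Real.dist_eq, abs_sub_comm, abs_of_nonneg (by linarith [hs1])]

private lemma subset_cases (P : Finset ℝ) (hP : P ⊆ fac12) (hc : P.card = 2) :
    P = {0, 1} ∨ P = ({0, Real.sqrt 2} : Finset ℝ) ∨ P = ({1, Real.sqrt 2} : Finset ℝ) := by
  obtain ⟨a, b, hab, rfl⟩ := Finset.card_eq_two.mp hc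
  have ha : a ∈ fac12 := hP (by simp)
  have hb : b ∈ fac12 := hP (by simp)
  simp only [fac12, Finset.mem_insert, Finset.mem_singleton] at ha hb
  rcases ha with rfl | rfl | rfl <;> rcases hb with rfl | rfl | rfl <;>
    first
      | exact absurd rfl hab
      | (left; rfl)
      | (right; left; rfl)
      | (right; right; rfl)
      | (left; exact Finset.pair_comm _ _)
      | (right; left; exact Finset.pair_comm _ _)
      | (right; right; exact Finset.pair_comm _ _)

private lemma mA : maxSum12 {0, 1} = 1 := by
  rw [maxSum12, Finset.sum_pair (by norm_num), Finset.sum_pair (by norm_num), d01]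
  simp [Real.dist_eq]

private lemma mB : maxSum12 {0, Real.sqrt 2} = Real.sqrt 2 := by
  rw [maxSum12, Finset.sum_pair hsne0.symm, Finset.sum_pair hsne0.symm, d0s, d1s,
    dist_self, Real.dist_eq]
  norm_num

private lemma mC : maxSum12 {1, Real.sqrt 2} = 1 + Real.sqrt 2 := by
  rw [maxSum12, Finset.sum_pair hsne1.symm, Finset.sum_pair hsne1.symm, d0s, d1s, d01,
    dist_self]
  rw [max_eq_left (by linarith [hs1])]

private lemma sA (n : ℕ) : sumSum12 n {0, 1} = n := by
  rw [sumSum12, Finset.sum_pair (by norm_num), d01]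
  simp [Real.dist_eq]

private lemma sB (n : ℕ) : sumSum12 n {0, Real.sqrt 2} = n * Real.sqrt 2 := by
  rw [sumSum12, Finset.sum_pair hsne0.symm, d0s, d1s]
  simp [Real.dist_eq]
  ring

private lemma sC (n : ℕ) : sumSum12 n {1, Real.sqrt 2} = (Real.sqrt 2 - 1) * n + 2 := by
  rw [sumSum12, Finset.sum_pair hsne1.symm, d0s, d1s, d01]
  simp [Real.dist_eq]
  ring

theorem stmt_12 :
    ∀ ε > (0 : ℝ), ∃ N : ℕ, ∀ n ≥ N,
      ∀ A' Om Os : Finset ℝ,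
        A' ⊆ fac12 → A'.card = 2 →
        Om ⊆ fac12 → Om.card = 2 →
        (∀ P ⊆ fac12, P.card = 2 → maxSum12 Om ≤ maxSum12 P) →
        Os ⊆ fac12 → Os.card = 2 →
        (∀ P ⊆ fac12, P.card = 2 → sumSum12 n Os ≤ sumSum12 n P) →
        1 + Real.sqrt 2 - ε ≤
          max (maxSum12 A' / maxSum12 Om) (sumSum12 n A' / sumSum12 n Os) := by
  intro ε hε
  set s := Real.sqrt 2 with hs
  have h1 : 1 < s := hs1
  have h2 : s ^ 2 = 2 := hs2
  obtain ⟨M, hM⟩ := exists_nat_gt ((2 + 2 * s) / (ε * (s - 1)))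
  refine ⟨max M 12, fun n hn => ?_⟩
  have hn12 : (12 : ℝ) ≤ n := by
    have : (12 : ℕ) ≤ n := le_trans (le_max_right M 12) hn
    exact_mod_cast this
  have hnM : (2 + 2 * s) / (ε * (s - 1)) < n := by
    have : (M : ℝ) ≤ n := by exact_mod_cast le_trans (le_max_left M 12) hn
    linarith
  have hεs : 0 < ε * (s - 1) := mul_pos hε (by linarith)
  have hkey : 2 + 2 * s < ε * (s - 1) * n := by
    rw [div_lt_iff₀ hεs] at hnM; linarith [hnM]
  intro A' Om Os hA' hA'c hOm hOmc hOmmin hOs hOsc hOsmin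
  -- subset lemmas
  have h01 : ({0, 1} : Finset ℝ) ⊆ fac12 := by
    intro x hx; simp only [Finset.mem_insert, Finset.mem_singleton] at hx
    rcases hx with rfl | rfl <;> simp [fac12]
  have h0s : ({0, s} : Finset ℝ) ⊆ fac12 := by
    intro x hx; simp only [Finset.mem_insert, Finset.mem_singleton] at hx
    rcases hx with rfl | rfl <;> simp [fac12, hs]
  have h1s : ({1, s} : Finset ℝ) ⊆ fac12 := by
    intro x hx; simp only [Finset.mem_insert, Finset.mem_singleton] at hx
    rcases hx with rfl | rfl <;> simp [fac12, hs]
  have c01 : ({0, 1} : Finset ℝ).card = 2 := by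
    rw [Finset.card_pair (by norm_num)]
  have c0s : ({0, s} : Finset ℝ).card = 2 := by
    rw [Finset.card_pair hsne0.symm]
  have c1s : ({1, s} : Finset ℝ).card = 2 := by
    rw [Finset.card_pair hsne1.symm]
  -- value of the maxSum optimum
  have hOmval : maxSum12 Om = 1 := by
    have hle := hOmmin {0, 1} h01 c01
    rw [mA] at hle
    rcases subset_cases Om hOm hOmc with h | h | h <;> rw [h] at hle ⊢
    · exact mA
    · rw [mB] at hle; linarith
    · rw [mC] at hle; linarith
  -- value of the sumSum optimum
  have hD : (0 : ℝ) < (s - 1) * n + 2 := by nlinarith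
  have hOsval : sumSum12 n Os = (s - 1) * n + 2 := by
    have hle := hOsmin {1, s} h1s c1s
    rw [sC] at hle
    rcases subset_cases Os hOs hOsc with h | h | h <;> rw [h] at hle ⊢
    · rw [sA] at hle; nlinarith
    · rw [sB] at hle; nlinarith
    · exact sC n
  rcases subset_cases A' hA' hA'c with h | h | h <;> subst h
  · -- A' = {0,1}: sumSum ratio ≥ 1+s-ε
    refine le_max_of_le_right ?_
    rw [sA, hOsval, le_div_iff₀ hD]
    nlinarith [hε, hkey]
  · -- A' = {0,s}: sumSum ratio ≥ 1+s for n ≥ 12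
    refine le_max_of_le_right ?_
    rw [sB, hOsval, le_div_iff₀ hD]
    have hs14 : (1.4 : ℝ) ≤ s := by nlinarith
    nlinarith [hε, hs14, hn12]
  · -- A' = {1,s}: maxSum ratio = 1+s
    refine le_max_of_le_left ?_
    rw [mC, hOmval, div_one]
    linarith
end

section
/- With O_MΣ optimal for Max-Sum and O_MM optimal for Max-Max over k-subsets, at least one of Max-Sum(O_MM)/Max-Sum(O_MΣ) and Max-Max(O_MΣ)/Max-Max(O_MM) is at most √k. -/
theorem stmt_14 {M : Type*} [MetricSpace M] (C F : Finset M) (hC : C.Nonempty)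
    (k : ℕ) (hk : 1 ≤ k)
    (OMS OMM : Finset M) (hMSF : OMS ⊆ F) (hMScard : OMS.card = k)
    (hMMF : OMM ⊆ F) (hMMcard : OMM.card = k)
    (hMSne : OMS.Nonempty) (hMMne : OMM.Nonempty)
    (hMSopt : ∀ P ⊆ F, P.card = k →
      C.sup' hC (fun i => ∑ a ∈ OMS, dist i a) ≤
        C.sup' hC (fun i => ∑ a ∈ P, dist i a))
    (hMMopt : ∀ P ⊆ F, ∀ hP : P.Nonempty, P.card = k →
      C.sup' hC (fun i => OMM.sup' hMMne (fun a => dist i a)) ≤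
        C.sup' hC (fun i => P.sup' hP (fun a => dist i a)))
    (hMSpos : 0 < C.sup' hC (fun i => ∑ a ∈ OMS, dist i a))
    (hMMpos : 0 < C.sup' hC (fun i => OMM.sup' hMMne (fun a => dist i a))) :
    C.sup' hC (fun i => ∑ a ∈ OMM, dist i a) /
        C.sup' hC (fun i => ∑ a ∈ OMS, dist i a) ≤ Real.sqrt k ∨
      C.sup' hC (fun i => OMS.sup' hMSne (fun a => dist i a)) /
        C.sup' hC (fun i => OMM.sup' hMMne (fun a => dist i a)) ≤ Real.sqrt k := by
  set s1 := C.sup' hC (fun i => ∑ a ∈ OMS, dist i a) with hs1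
  set s2 := C.sup' hC (fun i => ∑ a ∈ OMM, dist i a) with hs2
  set m1 := C.sup' hC (fun i => OMS.sup' hMSne (fun a => dist i a)) with hm1
  set m2 := C.sup' hC (fun i => OMM.sup' hMMne (fun a => dist i a)) with hm2
  -- s2 ≤ k * m2
  have h1 : s2 ≤ (k : ℝ) * m2 := by
    apply Finset.sup'_le
    intro i hi
    calc ∑ a ∈ OMM, dist i a ≤ OMM.card • OMM.sup' hMMne (fun a => dist i a) := by
          apply Finset.sum_le_card_nsmul
          intro a ha
          exact Finset.le_sup' _ ha
      _ = (k : ℝ) * OMM.sup' hMMne (fun a => dist i a) := by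
          rw [hMMcard, nsmul_eq_mul]
      _ ≤ (k : ℝ) * m2 := by
          apply mul_le_mul_of_nonneg_left _ (by positivity)
          exact Finset.le_sup' (fun i => OMM.sup' hMMne (fun a => dist i a)) hi
  -- m1 ≤ s1
  have h2 : m1 ≤ s1 := by
    apply Finset.sup'_le
    intro i hi
    apply le_trans _ (Finset.le_sup' (fun i => ∑ a ∈ OMS, dist i a) hi)
    apply Finset.sup'_le
    intro a ha
    exact Finset.single_le_sum (f := fun a => dist i a) (fun b _ => dist_nonneg) ha
  obtain ⟨i0, hi0⟩ := hC
  have hs2nn : 0 ≤ s2 :=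
    le_trans (Finset.sum_nonneg fun a _ => dist_nonneg)
      (Finset.le_sup' (fun i => ∑ a ∈ OMM, dist i a) hi0)
  have hm1nn : 0 ≤ m1 :=
    le_trans (le_trans dist_nonneg
        (Finset.le_sup' (fun a => dist i0 a) hMSne.choose_spec))
      (Finset.le_sup' (fun i => OMS.sup' hMSne (fun a => dist i a)) hi0)
  by_contra hcon
  push_neg at hcon
  obtain ⟨hA, hB⟩ := hcon
  have hsk : (0:ℝ) ≤ Real.sqrt k := Real.sqrt_nonneg _
  have hprod : (k : ℝ) < (s2 / s1) * (m1 / m2) := by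
    calc (k : ℝ) = Real.sqrt k * Real.sqrt k := by
          exact (Real.mul_self_sqrt (by positivity)).symm
      _ < (s2 / s1) * (m1 / m2) :=
          mul_lt_mul'' hA hB hsk hsk
  have hprod2 : (s2 / s1) * (m1 / m2) ≤ (k : ℝ) := by
    rw [div_mul_div_comm, div_le_iff₀ (by positivity)]
    calc s2 * m1 ≤ ((k : ℝ) * m2) * s1 :=
          mul_le_mul h1 h2 hm1nn (by positivity)
      _ = (k : ℝ) * (s1 * m2) := by ring
  linarith
end

section
/- Let O_MΣ minimize Max-Sum over k-subsets, let (i*,b*) achieve max_{i∈C, b∈O_MΣ} d(i,b), and define k₁ by k₁·d(i*,b*) = max_{i∈C} Σ_{b∈O_MΣ} d(i,b). Then for every client j ∈ C: (k−2)·d(j,b*) ≥ (k−2k₁)·d(i*,b*). -/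
theorem stmt_15 {M : Type*} [MetricSpace M] (C F : Finset M) (hC : C.Nonempty)
    (k : ℕ) (hk : 2 ≤ k)
    (O : Finset M) (hOF : O ⊆ F) (hOcard : O.card = k)
    (hOopt : ∀ P ⊆ F, P.card = k →
      C.sup' hC (fun i => ∑ a ∈ O, dist i a) ≤
        C.sup' hC (fun i => ∑ a ∈ P, dist i a))
    (istar bstar : M) (histar : istar ∈ C) (hbstar : bstar ∈ O)
    (hmax : ∀ i ∈ C, ∀ b ∈ O, dist i b ≤ dist istar bstar)
    (k₁ : ℝ)
    (hk₁ : k₁ * dist istar bstar = C.sup' hC (fun i => ∑ b ∈ O, dist i b)) :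
    ∀ j ∈ C, ((k : ℝ) - 2 * k₁) * dist istar bstar ≤ ((k : ℝ) - 2) * dist j bstar := by
  classical
  intro j hj
  set D := dist istar bstar with hD
  have h1 : ∑ b ∈ O, dist istar b ≤ k₁ * D := by
    rw [hk₁]; exact Finset.le_sup' (fun i => ∑ b ∈ O, dist i b) histar
  have h2 : ∑ b ∈ O, dist j b ≤ k₁ * D := by
    rw [hk₁]; exact Finset.le_sup' (fun i => ∑ b ∈ O, dist i b) hj
  have hsplit : ∑ b ∈ O, dist istar b = D + ∑ b ∈ O.erase bstar, dist istar b :=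
    (Finset.add_sum_erase _ _ hbstar).symm
  have hsplit2 : ∑ b ∈ O, dist j b = dist j bstar + ∑ b ∈ O.erase bstar, dist j b :=
    (Finset.add_sum_erase _ _ hbstar).symm
  have hcard : ((O.erase bstar).card : ℝ) = (k : ℝ) - 1 := by
    rw [Finset.card_erase_of_mem hbstar, hOcard]
    have : 1 ≤ k := le_trans (by norm_num) hk
    push_cast [Nat.cast_sub this]
    ring
  have htri : ∀ b ∈ O.erase bstar, D - dist j bstar - dist j b ≤ dist istar b := by
    intro b hb
    have h4 : D ≤ dist istar b + dist b j + dist j bstar := dist_triangle4 istar b j bstar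
    have hc : dist b j = dist j b := dist_comm b j
    linarith
  have hsum : ∑ b ∈ O.erase bstar, (D - dist j bstar - dist j b)
      ≤ ∑ b ∈ O.erase bstar, dist istar b := Finset.sum_le_sum htri
  have hsum2 : ∑ b ∈ O.erase bstar, (D - dist j bstar - dist j b)
      = ((k : ℝ) - 1) * (D - dist j bstar) - ∑ b ∈ O.erase bstar, dist j b := by
    rw [Finset.sum_sub_distrib, Finset.sum_const, nsmul_eq_mul, hcard]
  linarith
end

section
/- Let O_MΣ be a k-subset minimizing Max-Sum(A) = max_{i∈C} Σ_{a∈A} d(i,a), let b* ∈ O_MΣ and i* ∈ C achieve max_{i∈C, b∈O_MΣ} d(i,b), and set B = O_MΣ \ {b*}. Then for any facility location a ∈ F with a ∉ O_MΣ, there exists a client j ∈ C such that d(j,b*) ≤ d(j,a). -/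
theorem stmt_16 {M : Type*} [MetricSpace M] (C F : Finset M) (hC : C.Nonempty)
    (k : ℕ) (hk : 1 ≤ k)
    (O : Finset M) (hOF : O ⊆ F) (hOcard : O.card = k)
    (hOopt : ∀ P ⊆ F, P.card = k →
      C.sup' hC (fun i => ∑ a ∈ O, dist i a) ≤
        C.sup' hC (fun i => ∑ a ∈ P, dist i a))
    (istar bstar : M) (histar : istar ∈ C) (hbstar : bstar ∈ O)
    (hmax : ∀ i ∈ C, ∀ b ∈ O, dist i b ≤ dist istar bstar)
    (a : M) (haF : a ∈ F) (haO : a ∉ O) :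
    ∃ j ∈ C, dist j bstar ≤ dist j a := by
  classical
  set P : Finset M := insert a (O.erase bstar) with hP
  have haB : a ∉ O.erase bstar := fun h => haO (Finset.mem_of_mem_erase h)
  have hPF : P ⊆ F := by
    intro x hx
    rcases Finset.mem_insert.mp hx with rfl | hx
    · exact haF
    · exact hOF (Finset.mem_of_mem_erase hx)
  have hPcard : P.card = k := by
    rw [hP, Finset.card_insert_of_notMem haB, Finset.card_erase_of_mem hbstar, hOcard]
    omega
  have hle := hOopt P hPF hPcard
  obtain ⟨j, hjC, hj⟩ := C.exists_mem_eq_sup' hC (fun i => ∑ a ∈ P, dist i a)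
  refine ⟨j, hjC, ?_⟩
  have h1 : (∑ b ∈ O, dist j b) ≤ ∑ b ∈ P, dist j b := by
    calc (∑ b ∈ O, dist j b) ≤ C.sup' hC (fun i => ∑ b ∈ O, dist i b) :=
          Finset.le_sup' (fun i => ∑ b ∈ O, dist i b) hjC
      _ ≤ C.sup' hC (fun i => ∑ b ∈ P, dist i b) := hle
      _ = ∑ b ∈ P, dist j b := by rw [hj]
  have hO : (∑ b ∈ O, dist j b) = dist j bstar + ∑ b ∈ O.erase bstar, dist j b :=
    (Finset.add_sum_erase _ _ hbstar).symm
  have hPsum : (∑ b ∈ P, dist j b) = dist j a + ∑ b ∈ O.erase bstar, dist j b :=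
    Finset.sum_insert haB
  rw [hO, hPsum] at h1
  linarith
end

section
/- Let O_MΣ be optimal for Max-Sum and O_MM optimal for Max-Max over k-subsets of facilities. Then at least one of the ratios Max-Sum(O_MM)/Max-Sum(O_MΣ) and Max-Max(O_MΣ)/Max-Max(O_MM) is at most 2. -/
theorem stmt_17 {M : Type*} [MetricSpace M] (C F : Finset M) (hC : C.Nonempty)
    (k : ℕ) (hk : 1 ≤ k)
    (OMS OMM : Finset M) (hMSF : OMS ⊆ F) (hMScard : OMS.card = k)
    (hMMF : OMM ⊆ F) (hMMcard : OMM.card = k)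
    (hMSne : OMS.Nonempty) (hMMne : OMM.Nonempty)
    (hMSopt : ∀ P ⊆ F, P.card = k →
      C.sup' hC (fun i => ∑ a ∈ OMS, dist i a) ≤
        C.sup' hC (fun i => ∑ a ∈ P, dist i a))
    (hMMopt : ∀ P ⊆ F, ∀ hP : P.Nonempty, P.card = k →
      C.sup' hC (fun i => OMM.sup' hMMne (fun a => dist i a)) ≤
        C.sup' hC (fun i => P.sup' hP (fun a => dist i a)))
    (hMSpos : 0 < C.sup' hC (fun i => ∑ a ∈ OMS, dist i a))
    (hMMpos : 0 < C.sup' hC (fun i => OMM.sup' hMMne (fun a => dist i a))) :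
    C.sup' hC (fun i => ∑ a ∈ OMM, dist i a) /
        C.sup' hC (fun i => ∑ a ∈ OMS, dist i a) ≤ 2 ∨
      C.sup' hC (fun i => OMS.sup' hMSne (fun a => dist i a)) /
        C.sup' hC (fun i => OMM.sup' hMMne (fun a => dist i a)) ≤ 2 := by
  set Mv := C.sup' hC (fun i => OMM.sup' hMMne (fun a => dist i a)) with hMv
  set Sv := C.sup' hC (fun i => ∑ a ∈ OMS, dist i a) with hSv
  -- every client-OMM distance is at most Mv
  have hdib : ∀ i ∈ C, ∀ b ∈ OMM, dist i b ≤ Mv := by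
    intro i hi b hb
    have h1 : dist i b ≤ OMM.sup' hMMne (fun a => dist i a) :=
      Finset.le_sup' (fun a => dist i a) hb
    have h2 : OMM.sup' hMMne (fun a => dist i a) ≤ Mv :=
      Finset.le_sup' (fun i => OMM.sup' hMMne (fun a => dist i a)) hi
    linarith
  by_cases hR : C.sup' hC (fun i => OMS.sup' hMSne (fun a => dist i a)) ≤ 2 * Mv
  · right
    rw [div_le_iff₀ hMMpos]
    linarith
  · left
    classical
    push_neg at hR
    obtain ⟨i0, hi0, hR0⟩ := (Finset.lt_sup'_iff hC).mp hR
    obtain ⟨astar, hastar, hR1⟩ := (Finset.lt_sup'_iff hMSne).mp hR0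
    -- astar is not in OMM
    have hanotin : astar ∉ OMM := by
      intro hmem
      have := hdib i0 hi0 astar hmem
      linarith
    -- pick b0 ∈ OMM \ OMS
    have hnsub : ¬ OMM ⊆ OMS := by
      intro hsub
      have : OMM = OMS := Finset.eq_of_subset_of_card_le hsub (by omega)
      exact hanotin (this ▸ hastar)
    obtain ⟨b0, hb0M, hb0S⟩ := Finset.not_subset.mp hnsub
    -- the swap set P
    set P := insert b0 (OMS.erase astar) with hP
    have hb0ne : b0 ∉ OMS.erase astar := fun h => hb0S (Finset.mem_of_mem_erase h)
    have hPF : P ⊆ F := by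
      rw [hP]
      exact Finset.insert_subset (hMMF hb0M)
        ((Finset.erase_subset _ _).trans hMSF)
    have hPcard : P.card = k := by
      rw [hP, Finset.card_insert_of_notMem hb0ne, Finset.card_erase_of_mem hastar,
        hMScard]
      omega
    have hSP := hMSopt P hPF hPcard
    obtain ⟨u, hu, hueq⟩ := Finset.exists_mem_eq_sup' hC (fun i => ∑ a ∈ P, dist i a)
    -- sums at u
    have hsumP : ∑ a ∈ P, dist u a = dist u b0 + ∑ a ∈ OMS.erase astar, dist u a := by
      rw [hP, Finset.sum_insert hb0ne]
    have hsumS : ∑ a ∈ OMS.erase astar, dist u a + dist u astar = ∑ a ∈ OMS, dist u a :=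
      Finset.sum_erase_add _ _ hastar
    have huS : ∑ a ∈ OMS, dist u a ≤ Sv :=
      Finset.le_sup' (fun i => ∑ a ∈ OMS, dist i a) hu
    have hub0 : dist u b0 ≤ Mv := hdib u hu b0 hb0M
    -- dist u astar ≤ Mv
    have huastar : dist u astar ≤ Mv := by
      have : Sv ≤ ∑ a ∈ P, dist u a := by rw [← hueq]; exact hSP
      rw [hsumP] at this
      linarith
    -- dist i0 u > Mv
    have hi0u : Mv < dist i0 u := by
      have htri : dist i0 astar ≤ dist i0 u + dist u astar := dist_triangle i0 u astar
      linarith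
    -- 2 * Sv > k * Mv
    have hsum_i0 : ∑ a ∈ OMS, dist i0 a ≤ Sv :=
      Finset.le_sup' (fun i => ∑ a ∈ OMS, dist i a) hi0
    have hkey : (k : ℝ) * dist i0 u ≤ ∑ a ∈ OMS, dist i0 a + ∑ a ∈ OMS, dist u a := by
      rw [← Finset.sum_add_distrib, ← hMScard]
      have : ∀ a ∈ OMS, dist i0 u ≤ dist i0 a + dist u a := by
        intro a _
        calc dist i0 u ≤ dist i0 a + dist a u := dist_triangle i0 a u
        _ = dist i0 a + dist u a := by rw [dist_comm a u]
      calc (OMS.card : ℝ) * dist i0 u = ∑ _a ∈ OMS, dist i0 u := by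
            rw [Finset.sum_const, nsmul_eq_mul]
      _ ≤ ∑ a ∈ OMS, (dist i0 a + dist u a) := Finset.sum_le_sum this
    have hkMv : (k : ℝ) * Mv < 2 * Sv := by
      have hkpos : (0 : ℝ) < k := by exact_mod_cast hk
      nlinarith
    -- MaxSum(OMM) ≤ k * Mv
    have hVle : C.sup' hC (fun i => ∑ a ∈ OMM, dist i a) ≤ (k : ℝ) * Mv := by
      apply Finset.sup'_le
      intro i hi
      calc ∑ b ∈ OMM, dist i b ≤ ∑ _b ∈ OMM, Mv :=
            Finset.sum_le_sum (fun b hb => hdib i hi b hb)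
      _ = (k : ℝ) * Mv := by rw [Finset.sum_const, nsmul_eq_mul, hMMcard]
    rw [div_le_iff₀ hMSpos]
    linarith
end

section
/- Let O_ΣM minimize Sum-Max and O_ΣΣ minimize Sum-Sum over k-subsets. Then (Sum-Sum(O_ΣM)/Sum-Sum(O_ΣΣ)) · (Sum-Max(O_ΣΣ)/Sum-Max(O_ΣM)) ≤ k, and consequently at least one of these two ratios is at most √k. -/
theorem stmt_18 {M : Type*} [MetricSpace M] (C F : Finset M) (hC : C.Nonempty)
    (k : ℕ) (hk : 1 ≤ k)
    (OSM OSS : Finset M) (hSMF : OSM ⊆ F) (hSMcard : OSM.card = k)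
    (hSSF : OSS ⊆ F) (hSScard : OSS.card = k)
    (hSMne : OSM.Nonempty) (hSSne : OSS.Nonempty)
    (hSMopt : ∀ P ⊆ F, ∀ hP : P.Nonempty, P.card = k →
      ∑ i ∈ C, OSM.sup' hSMne (fun a => dist i a) ≤
        ∑ i ∈ C, P.sup' hP (fun a => dist i a))
    (hSSopt : ∀ P ⊆ F, P.card = k →
      ∑ i ∈ C, ∑ a ∈ OSS, dist i a ≤ ∑ i ∈ C, ∑ a ∈ P, dist i a)
    (hSSpos : 0 < ∑ i ∈ C, ∑ a ∈ OSS, dist i a)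
    (hSMpos : 0 < ∑ i ∈ C, OSM.sup' hSMne (fun a => dist i a)) :
    ((∑ i ∈ C, ∑ a ∈ OSM, dist i a) / (∑ i ∈ C, ∑ a ∈ OSS, dist i a)) *
        ((∑ i ∈ C, OSS.sup' hSSne (fun a => dist i a)) /
          (∑ i ∈ C, OSM.sup' hSMne (fun a => dist i a))) ≤ (k : ℝ) ∧
      ((∑ i ∈ C, ∑ a ∈ OSM, dist i a) / (∑ i ∈ C, ∑ a ∈ OSS, dist i a) ≤
          Real.sqrt k ∨
        (∑ i ∈ C, OSS.sup' hSSne (fun a => dist i a)) /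
          (∑ i ∈ C, OSM.sup' hSMne (fun a => dist i a)) ≤ Real.sqrt k) := by
  set A := ∑ i ∈ C, ∑ a ∈ OSM, dist i a with hA
  set B := ∑ i ∈ C, ∑ a ∈ OSS, dist i a with hB
  set S := ∑ i ∈ C, OSS.sup' hSSne (fun a => dist i a) with hS
  set T := ∑ i ∈ C, OSM.sup' hSMne (fun a => dist i a) with hT
  have hAkT : A ≤ (k : ℝ) * T := by
    rw [hA, hT, Finset.mul_sum]
    apply Finset.sum_le_sum
    intro i _
    calc ∑ a ∈ OSM, dist i a ≤ OSM.card • OSM.sup' hSMne (fun a => dist i a) := by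
          apply Finset.sum_le_card_nsmul
          intro a ha; exact Finset.le_sup' _ ha
      _ = (k : ℝ) * OSM.sup' hSMne (fun a => dist i a) := by
          rw [hSMcard, nsmul_eq_mul]
  have hSB : S ≤ B := by
    apply Finset.sum_le_sum
    intro i _
    apply Finset.sup'_le
    intro a ha
    exact Finset.single_le_sum (f := fun a => dist i a) (fun b _ => dist_nonneg) ha
  have hAnn : 0 ≤ A := Finset.sum_nonneg fun i _ =>
    Finset.sum_nonneg fun a _ => dist_nonneg
  have hSnn : 0 ≤ S := le_trans (Finset.sum_nonneg fun i _ => dist_nonneg)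
    (Finset.sum_le_sum fun i _ => Finset.le_sup' _ hSSne.choose_spec)
  have hprod : A / B * (S / T) ≤ (k : ℝ) := by
    rw [div_mul_div_comm, div_le_iff₀ (by positivity)]
    calc A * S ≤ ((k : ℝ) * T) * B := by
          apply mul_le_mul hAkT hSB hSnn
          positivity
      _ = (k : ℝ) * (B * T) := by ring
  refine ⟨hprod, ?_⟩
  by_contra h
  push_neg at h
  obtain ⟨h1, h2⟩ := h
  have hsq : (0:ℝ) ≤ Real.sqrt k := Real.sqrt_nonneg _
  have : (k : ℝ) < A / B * (S / T) := by
    calc (k : ℝ) = Real.sqrt k * Real.sqrt k := by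
          rw [Real.mul_self_sqrt (by positivity)]
      _ < A / B * (S / T) := by
          apply mul_lt_mul' h1.le h2 hsq
          exact lt_of_le_of_lt hsq h1
  linarith
end

section
/- Let f be a cost function on voter–committee pairs satisfying f(v,A) ≤ f(v,B) + f(p,B) + f(p,A) for all voters v,p and committees A,B. Let A be a committee, let v^1,…,v^n order the voters by decreasing f(·,A), and suppose there is an injective map p: {1,…,l} → C (voters) such that for each i, f(v^i, A) ≤ f(v^i, A_{p[i]}), where A_{p[i]} is the favorite committee of voter p[i] (i.e., f(p[i], A_{p[i]}) ≤ f(p[i], X) for every committee X). Then for the l-centrum objective c_l(X), the sum of the l largest values of f(·,X), and any committee O, we have c_l(A) ≤ 3·c_l(O). -/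
lemma aux_le' {l n : ℕ} (g : Fin l → Fin n) (hg : StrictMono g) :
    ∀ (m : ℕ) (j : Fin l), (j : ℕ) = m → m ≤ (g j : ℕ) := by
  intro m
  induction m with
  | zero => intro j _; omega
  | succ m ih =>
    intro j hm
    have hml : m < l := by omega
    have hlt : (⟨m, hml⟩ : Fin l) < j := by
      rw [Fin.lt_def]; simp; omega
    have h1 : (g ⟨m, hml⟩ : ℕ) < (g j : ℕ) := hg hlt
    have h2 : m ≤ (g ⟨m, hml⟩ : ℕ) := ih _ rfl
    omega

lemma aux_le {l n : ℕ} (g : Fin l → Fin n) (hg : StrictMono g) (j : Fin l) :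
    (j : ℕ) ≤ (g j : ℕ) := aux_le' g hg _ j rfl

theorem stmt_19 {ι : Type*} (n l : ℕ) (hl : 1 ≤ l) (hln : l ≤ n)
    (f : Fin n → ι → ℝ)
    (hf0 : ∀ v X, 0 ≤ f v X)
    (htri : ∀ (v p : Fin n) (X Y : ι), f v X ≤ f v Y + f p Y + f p X)
    (A O : ι)
    (hsort : ∀ i j : Fin n, i ≤ j → f j A ≤ f i A)
    (fav : Fin n → ι)
    (hfav : ∀ (v : Fin n) (X : ι), f v (fav v) ≤ f v X)
    (p : Fin l → Fin n) (hp : Function.Injective p)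
    (hmatch : ∀ i : Fin l, f (Fin.castLE hln i) A ≤ f (Fin.castLE hln i) (fav (p i)))
    (hne : ((Finset.univ : Finset (Fin n)).powersetCard l).Nonempty) :
    (((Finset.univ : Finset (Fin n)).powersetCard l).sup' hne
        (fun S => ∑ v ∈ S, f v A)) ≤
      3 * (((Finset.univ : Finset (Fin n)).powersetCard l).sup' hne
        (fun S => ∑ v ∈ S, f v O)) := by
  set T := (((Finset.univ : Finset (Fin n)).powersetCard l).sup' hne
      (fun S => ∑ v ∈ S, f v O)) with hT
  -- sums over injective images are ≤ T
  have hsumT : ∀ (g : Fin l → Fin n), Function.Injective g →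
      (∑ i : Fin l, f (g i) O) ≤ T := by
    intro g hg
    have hmem : (Finset.univ : Finset (Fin l)).image g ∈
        ((Finset.univ : Finset (Fin n)).powersetCard l) := by
      rw [Finset.mem_powersetCard]
      refine ⟨Finset.subset_univ _, ?_⟩
      rw [Finset.card_image_of_injective _ hg, Finset.card_univ, Fintype.card_fin]
    calc (∑ i : Fin l, f (g i) O) = ∑ v ∈ (Finset.univ : Finset (Fin l)).image g, f v O := by
          rw [Finset.sum_image (fun a _ b _ h => hg h)]
      _ ≤ T := Finset.le_sup' (fun S => ∑ v ∈ S, f v O) hmem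
  -- step 1: bound sup' for A by the top-l sum
  have h1 : (((Finset.univ : Finset (Fin n)).powersetCard l).sup' hne
      (fun S => ∑ v ∈ S, f v A)) ≤ ∑ i : Fin l, f (Fin.castLE hln i) A := by
    apply Finset.sup'_le
    intro S hS
    rw [Finset.mem_powersetCard] at hS
    obtain ⟨-, hcard⟩ := hS
    have hrange : Set.range (S.orderEmbOfFin hcard) = ↑S := Finset.range_orderEmbOfFin S hcard
    have himg : (Finset.univ : Finset (Fin l)).image (S.orderEmbOfFin hcard) = S := by
      apply Finset.coe_injective
      rw [Finset.coe_image, Finset.coe_univ, Set.image_univ, hrange]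
    calc ∑ v ∈ S, f v A
        = ∑ i : Fin l, f (S.orderEmbOfFin hcard i) A := by
          conv_lhs => rw [← himg]
          exact Finset.sum_image (fun a _ b _ h => (S.orderEmbOfFin hcard).injective h)
      _ ≤ ∑ i : Fin l, f (Fin.castLE hln i) A := by
          apply Finset.sum_le_sum
          intro i _
          apply hsort
          have := aux_le _ (S.orderEmbOfFin hcard).strictMono i
          exact Fin.le_def.mpr this
  -- step 2: per-term bound
  have h2 : ∑ i : Fin l, f (Fin.castLE hln i) A ≤
      ∑ i : Fin l, (f (Fin.castLE hln i) O + 2 * f (p i) O) := by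
    apply Finset.sum_le_sum
    intro i _
    have t1 := hmatch i
    have t2 := htri (Fin.castLE hln i) (p i) (fav (p i)) O
    have t3 := hfav (p i) O
    linarith
  have h3 : (∑ i : Fin l, f (Fin.castLE hln i) O) ≤ T :=
    hsumT _ (fun a b h => by
      have := congrArg Fin.val h
      simpa [Fin.ext_iff] using this)
  have h4 : (∑ i : Fin l, f (p i) O) ≤ T := hsumT p hp
  have : ∑ i : Fin l, (f (Fin.castLE hln i) O + 2 * f (p i) O) ≤ 3 * T := by
    rw [Finset.sum_add_distrib, ← Finset.mul_sum]
    linarith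
  linarith
end
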